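/- Let P ⊂ ℝ^d be a d-dimensional weakly neighbourly antipodal convex polytope with v vertices. Then v ≤ X(P), where X(P) is the X-ray number of P. -/

import Mathlib

open scoped RealInnerProductSpace

def IsXRayed {d : ℕ} (K : Set (EuclideanSpace ℝ (Fin d)))
    (v p : EuclideanSpace ℝ (Fin d)) : Prop :=
  ∃ t : ℝ, p + t • v ∈ interior K

noncomputable def xrayNumber {d : ℕ} (K : Set (EuclideanSpace ℝ (Fin d))) : ℕ :=
  sInf {n | ∃ D : Finset (EuclideanSpace ℝ (Fin d)), D.card = n ∧ (∀ v ∈ D, v ≠ 0) ∧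
    ∀ p ∈ K, ∃ v ∈ D, IsXRayed K v p}

def IsFaceOf {d : ℕ} (K F : Set (EuclideanSpace ℝ (Fin d))) : Prop :=
  ∃ (n : EuclideanSpace ℝ (Fin d)) (c : ℝ), n ≠ 0 ∧ (∀ x ∈ K, ⟪n, x⟫ ≤ c) ∧
    (∃ x ∈ K, ⟪n, x⟫ = c) ∧ F = {x ∈ K | ⟪n, x⟫ = c}

/-! Two distinct vertices `u`, `w` cannot be X-rayed along the same direction `v`: if
`u + t • v` and `w + s • v` are interior points, then a supporting hyperplane through both `u`
and `w` (weak neighbourliness) forces `t` and `s` to have the same sign, while a pair of parallel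
supporting hyperplanes through `u` and `w` (antipodality) forces opposite signs. Hence a family
of X-ray directions covering `P` contains a different direction for each vertex. Since `P` is
compact with nonempty interior, such finite families exist, so `xrayNumber P` is not the junk
value `sInf ∅ = 0`. -/

section InnerProductSpace

variable {E : Type*} [NormedAddCommGroup E] [InnerProductSpace ℝ E]

theorem inner_lt_of_mem_interior {K : Set E} {n x : E} {c : ℝ} (hn : n ≠ 0)
    (hK : ∀ y ∈ K, ⟪n, y⟫ ≤ c) (hx : x ∈ interior K) : ⟪n, x⟫ < c := by
  have hf : innerSL ℝ n ≠ 0 := fun h => hn (by simpa using congrArg (· n) h)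
  have himage : innerSL ℝ n '' interior K ⊆ Set.Iio c := by
    rw [← interior_Iic]
    exact interior_maximal (Set.image_subset_iff.2 fun y hy => hK y (interior_subset hy))
      ((innerSL ℝ n).isOpenMap_of_ne_zero hf _ isOpen_interior)
  exact himage ⟨x, hx, rfl⟩

theorem mul_inner_neg_of_add_smul_mem_interior {K : Set E} {n u v : E} {t : ℝ} (hn : n ≠ 0)
    (hu : ∀ x ∈ K, ⟪n, x⟫ ≤ ⟪n, u⟫) (ht : u + t • v ∈ interior K) : t * ⟪n, v⟫ < 0 := by
  have h := inner_lt_of_mem_interior hn hu ht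
  rw [inner_add_right, real_inner_smul_right] at h
  linarith

end InnerProductSpace

section XRay

variable {d : ℕ}

theorem exists_finset_isXRayed [Nontrivial (EuclideanSpace ℝ (Fin d))]
    {K : Set (EuclideanSpace ℝ (Fin d))} (hK : IsCompact K) (hint : (interior K).Nonempty) :
    ∃ D : Finset (EuclideanSpace ℝ (Fin d)), (∀ v ∈ D, v ≠ 0) ∧
      ∀ p ∈ K, ∃ v ∈ D, IsXRayed K v p := by
  obtain ⟨q, hq⟩ := hint
  have hopen : ∀ v, IsOpen {p | IsXRayed K v p} := fun v => by
    simp only [IsXRayed, Set.ofPred_exists]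
    exact isOpen_iUnion fun t => isOpen_interior.preimage (continuous_add_const _)
  have hcover : K ⊆ ⋃ v ∈ {v | v ≠ 0}, {p | IsXRayed K v p} := by
    intro p _
    obtain ⟨v, hv, hpv⟩ : ∃ v ≠ 0, IsXRayed K v p := by
      by_cases hpq : p = q
      · obtain ⟨v, hv⟩ := exists_ne (0 : EuclideanSpace ℝ (Fin d))
        exact ⟨v, hv, 0, by simpa [hpq] using hq⟩
      · exact ⟨q - p, sub_ne_zero.2 (Ne.symm hpq), 1, by simpa using hq⟩
    exact Set.mem_biUnion hv hpv
  obtain ⟨D, hD0, hDfin, hKD⟩ := hK.elim_finite_subcover_image (fun v _ => hopen v) hcover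
  refine ⟨hDfin.toFinset, fun v hv => hD0 (hDfin.mem_toFinset.1 hv), fun p hp => ?_⟩
  obtain ⟨v, hv, hpv⟩ := Set.mem_iUnion₂.1 (hKD hp)
  exact ⟨v, hDfin.mem_toFinset.2 hv, hpv⟩

theorem card_le_xrayNumber {K : Set (EuclideanSpace ℝ (Fin d))}
    {V : Finset (EuclideanSpace ℝ (Fin d))} (hVK : ∀ u ∈ V, u ∈ K)
    (hcover : ∃ D : Finset (EuclideanSpace ℝ (Fin d)), (∀ v ∈ D, v ≠ 0) ∧
      ∀ p ∈ K, ∃ v ∈ D, IsXRayed K v p)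
    (hsep : ∀ u ∈ V, ∀ w ∈ V, ∀ v, IsXRayed K v u → IsXRayed K v w → u = w) :
    V.card ≤ xrayNumber K := by
  obtain ⟨D, hD0, hDK⟩ := hcover
  refine le_csInf ⟨D.card, D, rfl, hD0, hDK⟩ ?_
  rintro _ ⟨D, rfl, -, hDK⟩
  choose! f hfD hfX using fun u hu => hDK u (hVK u hu)
  exact Finset.card_le_card_of_injOn f hfD fun u hu w hw huw =>
    hsep u hu w hw (f u) (hfX u hu) (huw ▸ hfX w hw)

theorem not_isXRayed_of_common_face_of_antipodal {K : Set (EuclideanSpace ℝ (Fin d))}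
    {n m u w v : EuclideanSpace ℝ (Fin d)}
    (hn : n ≠ 0) (hnu : ∀ x ∈ K, ⟪n, x⟫ ≤ ⟪n, u⟫) (hnw : ∀ x ∈ K, ⟪n, x⟫ ≤ ⟪n, w⟫)
    (hm : m ≠ 0) (hmu : ∀ x ∈ K, ⟪m, x⟫ ≤ ⟪m, u⟫) (hmw : ∀ x ∈ K, ⟪m, w⟫ ≤ ⟪m, x⟫)
    (hu : IsXRayed K v u) : ¬ IsXRayed K v w := by
  rintro ⟨s, hs⟩
  obtain ⟨t, ht⟩ := hu
  have htn := mul_inner_neg_of_add_smul_mem_interior hn hnu ht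
  have hsn := mul_inner_neg_of_add_smul_mem_interior hn hnw hs
  have htm := mul_inner_neg_of_add_smul_mem_interior hm hmu ht
  have hsm := mul_inner_neg_of_add_smul_mem_interior (neg_ne_zero.2 hm)
    (fun x hx => by simpa only [inner_neg_left, neg_le_neg_iff] using hmw x hx) hs
  rw [inner_neg_left] at hsm
  nlinarith [mul_pos_of_neg_of_neg htn hsm, mul_pos_of_neg_of_neg hsn htm]

end XRay

theorem card_vertices_le_xray_of_wn_antipodal_general {d : ℕ}
    (P : Set (EuclideanSpace ℝ (Fin d))) (V : Finset (EuclideanSpace ℝ (Fin d)))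
    (hP : P = convexHull ℝ (V : Set (EuclideanSpace ℝ (Fin d))))
    (hfull : (interior P).Nonempty)
    (hwn : ∀ u ∈ V, ∀ w ∈ V, ∃ F, IsFaceOf P F ∧ u ∈ F ∧ w ∈ F)
    (hap : ∀ u ∈ V, ∀ w ∈ V, u ≠ w → ∃ n : EuclideanSpace ℝ (Fin d), n ≠ 0 ∧
      (∀ x ∈ P, ⟪n, x⟫ ≤ ⟪n, u⟫) ∧ (∀ x ∈ P, ⟪n, w⟫ ≤ ⟪n, x⟫) ∧ ⟪n, u⟫ ≠ ⟪n, w⟫) :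
    V.card ≤ xrayNumber P := by
  obtain rfl | ⟨u₀, hu₀⟩ := V.eq_empty_or_nonempty
  · simp
  obtain ⟨_, ⟨n₀, -, hn₀, -⟩, -⟩ := hwn u₀ hu₀ u₀ hu₀
  have := nontrivial_of_ne n₀ 0 hn₀
  have hVP : ∀ u ∈ V, u ∈ P := fun u hu => hP ▸ subset_convexHull ℝ _ hu
  have hPc : IsCompact P := hP ▸ V.finite_toSet.isCompact_convexHull ℝ
  refine card_le_xrayNumber hVP (exists_finset_isXRayed hPc hfull) fun u hu w hw v hvu hvw => ?_
  by_contra huw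
  obtain ⟨F, ⟨n, c, hn, hle, -, rfl⟩, ⟨-, hnu⟩, ⟨-, hnw⟩⟩ := hwn u hu w hw
  obtain ⟨m, hm, hmu, hmw, -⟩ := hap u hu w hw huw
  exact not_isXRayed_of_common_face_of_antipodal hn (hnu ▸ hle) (hnw ▸ hle) hm hmu hmw hvu hvw

theorem card_vertices_le_xray_of_wn_antipodal {d : ℕ}
    (P : Set (EuclideanSpace ℝ (Fin d))) (V : Finset (EuclideanSpace ℝ (Fin d)))
    (hP : P = convexHull ℝ (V : Set (EuclideanSpace ℝ (Fin d))))
    (hV : (V : Set (EuclideanSpace ℝ (Fin d))) = Set.extremePoints ℝ P)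
    (hfull : (interior P).Nonempty)
    (hwn : ∀ u ∈ V, ∀ w ∈ V, ∃ F, IsFaceOf P F ∧ u ∈ F ∧ w ∈ F)
    (hap : ∀ u ∈ V, ∀ w ∈ V, u ≠ w → ∃ n : EuclideanSpace ℝ (Fin d), n ≠ 0 ∧
      (∀ x ∈ P, ⟪n, x⟫ ≤ ⟪n, u⟫) ∧ (∀ x ∈ P, ⟪n, w⟫ ≤ ⟪n, x⟫) ∧ ⟪n, u⟫ ≠ ⟪n, w⟫) :
    V.card ≤ xrayNumber P :=
  card_vertices_le_xray_of_wn_antipodal_general P V hP hfull hwn hap
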